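/- The linear map φ sending χ₁ ↦ H_h, χ₂ ↦ X_h, χ₃ ↦ Y_h + hH_h - (h²/4)X_h (equivalently H_h = χ₁, X_h = χ₂, Y_h = -hχ₁ + (h²/4)χ₂ + χ₃) is an isomorphism between the Woronowicz quantum Lie algebra L³ᴰ with brackets [χ₁,χ₂] = 2χ₂, [χ₁,χ₃] = -2χ₃, [χ₂,χ₃] = χ₁ - 4hχ₂, [χ₂,χ₁] = -2χ₂, [χ₃,χ₁] = -4hχ₁ + 2χ₃, [χ₃,χ₂] = -χ₁, [χ₃,χ₃] = -4hχ₃, [χ₁,χ₁] = [χ₂,χ₂] = 0, and the Jordanian quantum Lie algebra with brackets [X_h,H_h] = -2X_h, [H_h,X_h] = 2X_h, [X_h,Y_h] = H_h - 2hX_h, [Y_h,X_h] = -H_h - 2hX_h, [H_h,Y_h] = -2Y_h - 2hH_h + h²X_h, [Y_h,H_h] = 2Y_h - 2hH_h - h²X_h, [Y_h,Y_h] = -4hY_h, [X_h,X_h] = [H_h,H_h] = 0. -/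
import Mathlib


open Polynomial

/-- The Woronowicz quantum Lie algebra `L³ᴰ` and the Jordanian quantum Lie algebra,
as free `ℂ[h]`-modules of rank 3 (here `h = X` is the polynomial variable). -/
abbrev QLie := Fin 3 → Polynomial ℂ

/-- Structure constants of the Woronowicz bracket, basis `(χ₁, χ₂, χ₃)`. -/
noncomputable def brW : Fin 3 → Fin 3 → QLie :=
  ![![![0, 0, 0], ![0, 2, 0], ![0, 0, -2]],
    ![![0, -2, 0], ![0, 0, 0], ![1, -4 * X, 0]],
    ![![-4 * X, 0, 2], ![-1, 0, 0], ![0, 0, -4 * X]]]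

/-- Structure constants of the Jordanian bracket, basis `(X_h, H_h, Y_h)`. -/
noncomputable def brJ : Fin 3 → Fin 3 → QLie :=
  ![![![0, 0, 0], ![-2, 0, 0], ![-2 * X, 1, 0]],
    ![![2, 0, 0], ![0, 0, 0], ![X ^ 2, -2 * X, -2]],
    ![![-2 * X, -1, 0], ![-X ^ 2, -2 * X, 2], ![0, 0, -4 * X]]]

/-- The Jordanian bracket extended bilinearly to all of `L`. -/
noncomputable def brkJ (u v : QLie) : QLie :=
  ∑ i : Fin 3, ∑ j : Fin 3, (u i * v j) • brJ i j

/-- The `ℂ[h]`-linear map `φ`: `χ₁ ↦ H_h`, `χ₂ ↦ X_h`,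
`χ₃ ↦ Y_h + h H_h - (h²/4) X_h`, in Jordanian coordinates `(X_h, H_h, Y_h)`. -/
noncomputable def phiImg : Fin 3 → QLie :=
  ![![0, 1, 0], ![1, 0, 0], ![-(C (1/4 : ℂ)) * X ^ 2, X, 1]]

noncomputable def phi (u : QLie) : QLie := ∑ i : Fin 3, u i • phiImg i

lemma quarter_mul_four : (C (1/4:ℂ)) * 4 = 1 := by
  rw [show ((4:Polynomial ℂ)) = C 4 from (map_ofNat C 4).symm, ← C_mul]
  norm_num

lemma fin3_mk_two (h : 2 < 3) : (⟨2, h⟩ : Fin 3) = 2 := rfl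

noncomputable def psi (v : QLie) : QLie :=
  ![v 1 - X * v 2, v 0 + C (1/4 : ℂ) * X ^ 2 * v 2, v 2]

set_option maxHeartbeats 1600000 in
/-- `φ` is an isomorphism of quantum Lie algebras between the Woronowicz quantum Lie
algebra of the 3D bicovariant calculus on `SL_h(2)` and the Jordanian quantum
Lie algebra: it is bijective and intertwines the brackets on basis vectors. -/
theorem woronowicz_jordanian_iso :
    Function.Bijective phi ∧
    (∀ i j : Fin 3, phi (brW i j) = brkJ (phi (Pi.single i 1)) (phi (Pi.single j 1))) := by
  constructor
  · have hli : Function.LeftInverse psi phi := by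
      intro u
      funext k
      fin_cases k <;>
        simp [phi, psi, phiImg, Fin.sum_univ_three, smul_eq_mul] <;> ring
    have hri : Function.RightInverse psi phi := by
      intro v
      funext k
      fin_cases k <;>
        simp [phi, psi, phiImg, Fin.sum_univ_three, smul_eq_mul] <;> ring
    exact ⟨hli.injective, hri.surjective⟩
  · have hs : ∀ i : Fin 3, phi (Pi.single i 1) = phiImg i := by
      intro i
      funext k
      fin_cases i <;> fin_cases k <;>
        simp [phi, phiImg, Fin.sum_univ_three, Pi.single_apply, smul_eq_mul]
    intro i j
    rw [hs, hs]
    funext k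
    fin_cases i <;> fin_cases j <;> fin_cases k <;>
      · simp only [brkJ, brW, brJ, phiImg, Fin.sum_univ_three, smul_eq_mul,
          Pi.add_apply, Pi.smul_apply, Fin.mk_zero, Fin.mk_one, fin3_mk_two,
          Matrix.cons_val_zero, Matrix.cons_val_one,
          Matrix.head_cons, Matrix.cons_val_two, Matrix.tail_cons, phi]
        first
          | ring1
          | linear_combination (X : Polynomial ℂ) ^ 2 * quarter_mul_four
          | linear_combination (-(X : Polynomial ℂ) ^ 2) * quarter_mul_four
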